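/- Gentle measurement lemma: if ρ is a density matrix and P an orthogonal projection with tr(ρP) ≥ 1 − λ for 0 ≤ λ ≤ 1, then ‖ρ − PρP‖₁ ≤ 2√λ. -/

import Mathlib

/-!
Put `Q = 1 - P`, so that `ρ - PρP = Qρ + PρQ`. Polar decomposition gives a contraction `U` with
`U (ρ - PρP) = |ρ - PρP|`, hence `‖ρ - PρP‖₁ = Re tr (UQρ) + Re tr (UPρQ)`. The Cauchy–Schwarz
inequality for the semi-inner product `⟪X, Y⟫ = tr (Y ρ Xᴴ)` bounds the two terms by
`√tr (QρQ) · √tr ρ` and `√tr (PρP) · √tr (QρQ)`, and `tr (QρQ) = 1 - tr (ρP) ≤ λ`.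
-/

open Matrix
open scoped ComplexOrder

/-- A density matrix: positive semidefinite with unit trace. -/
def IsDensityMatrix {n : ℕ} (ρ : Matrix (Fin n) (Fin n) ℂ) : Prop :=
  ρ.PosSemidef ∧ ρ.trace = 1

/-- The trace norm of a (square complex) matrix: `tr √(AᴴA)`. -/
noncomputable def traceNorm {n : ℕ} (A : Matrix (Fin n) (Fin n) ℂ) : ℝ :=
  ((Matrix.posSemidef_conjTranspose_mul_self A).1.eigenvectorUnitary.1 *
    diagonal ((fun x : ℝ => (x : ℂ)) ∘ Real.sqrt ∘ (Matrix.posSemidef_conjTranspose_mul_self A).1.eigenvalues) *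
    (star (Matrix.posSemidef_conjTranspose_mul_self A).1.eigenvectorUnitary : Matrix (Fin n) (Fin n) ℂ)).trace.re

open scoped MatrixOrder

lemma IsStarProjection.trace_mul_mul_conjTranspose {ι R : Type*} [Fintype ι] [CommSemiring R]
    [StarRing R] {p : Matrix ι ι R} (hp : IsStarProjection p) (ρ : Matrix ι ι R) :
    (p * ρ * pᴴ).trace = (ρ * p).trace := by
  rw [← star_eq_conjTranspose, hp.isSelfAdjoint.star_eq, trace_mul_cycle, hp.isIdempotentElem.eq,
    trace_mul_comm]

namespace Matrix

variable {ι 𝕜 : Type*} [Fintype ι] [RCLike 𝕜]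

/-- Cauchy–Schwarz for the semi-inner product `⟪X, Y⟫ = tr (Y ρ Xᴴ)` defined by `ρ`. -/
lemma PosSemidef.norm_trace_mul_mul_conjTranspose_le {ρ : Matrix ι ι 𝕜} (hρ : ρ.PosSemidef)
    (X Y : Matrix ι ι 𝕜) :
    ‖(Y * ρ * Xᴴ).trace‖ ≤
      √(RCLike.re (X * ρ * Xᴴ).trace) * √(RCLike.re (Y * ρ * Yᴴ).trace) := by
  let _ := ρ.toMatrixSeminormedAddCommGroup hρ
  let _ := ρ.toMatrixInnerProductSpace hρ
  exact norm_inner_le_norm (𝕜 := 𝕜) X Y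

variable [DecidableEq ι]

lemma PosSemidef.re_trace_mul_mul_conjTranspose_le {X U : Matrix ι ι 𝕜} (hX : X.PosSemidef)
    (hU : (1 - Uᴴ * U).PosSemidef) :
    RCLike.re (U * X * Uᴴ).trace ≤ RCLike.re X.trace := by
  obtain ⟨B, rfl⟩ := CStarAlgebra.nonneg_iff_eq_star_mul_self.mp hX.nonneg
  rw [star_eq_conjTranspose]
  have h := (hU.mul_mul_conjTranspose_same B).trace_nonneg
  rw [Matrix.mul_sub, Matrix.sub_mul, trace_sub, Matrix.mul_one, sub_nonneg] at h
  calc RCLike.re (U * (Bᴴ * B) * Uᴴ).trace = RCLike.re (B * (Uᴴ * U) * Bᴴ).trace := by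
        rw [trace_mul_cycle, ← Matrix.mul_assoc, ← Matrix.mul_assoc, trace_mul_comm]
        simp only [Matrix.mul_assoc]
    _ ≤ RCLike.re (Bᴴ * B).trace := by
        rw [trace_mul_comm Bᴴ B]
        exact RCLike.re_le_re h

lemma PosSemidef.re_trace_mul_mul_mul_conjTranspose_le {ρ U : Matrix ι ι 𝕜} (hρ : ρ.PosSemidef)
    (hU : (1 - Uᴴ * U).PosSemidef) (A B : Matrix ι ι 𝕜) :
    RCLike.re (U * A * ρ * Bᴴ).trace ≤
      √(RCLike.re (A * ρ * Aᴴ).trace) * √(RCLike.re (B * ρ * Bᴴ).trace) := by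
  have hUA : RCLike.re (U * A * ρ * (U * A)ᴴ).trace ≤ RCLike.re (A * ρ * Aᴴ).trace := by
    simpa only [conjTranspose_mul, Matrix.mul_assoc] using
      (hρ.mul_mul_conjTranspose_same A).re_trace_mul_mul_conjTranspose_le hU
  calc RCLike.re (U * A * ρ * Bᴴ).trace ≤ ‖(U * A * ρ * Bᴴ).trace‖ := RCLike.re_le_norm _
    _ ≤ √(RCLike.re (B * ρ * Bᴴ).trace) * √(RCLike.re (U * A * ρ * (U * A)ᴴ).trace) :=
        hρ.norm_trace_mul_mul_conjTranspose_le B (U * A)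
    _ ≤ √(RCLike.re (A * ρ * Aᴴ).trace) * √(RCLike.re (B * ρ * Bᴴ).trace) := by
        rw [mul_comm]
        gcongr

/-- Polar decomposition, in the form `|M| = U M` with `U` a contraction. -/
lemma exists_contraction_mul_eq_cfc_sqrt (M : Matrix ι ι 𝕜) :
    ∃ U : Matrix ι ι 𝕜, (1 - Uᴴ * U).PosSemidef ∧ U * M = cfc Real.sqrt (Mᴴ * M) := by
  set A := Mᴴ * M
  have hA : IsSelfAdjoint A := isHermitian_conjTranspose_mul_self M
  have hc (g : ℝ → ℝ) : ContinuousOn g (spectrum ℝ A) := A.finite_real_spectrum.continuousOn g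
  -- `G` is the Moore–Penrose pseudo-inverse of `|M|`, and `U = G Mᴴ`.
  set G := cfc (fun x => (√x)⁻¹) A
  have hG : Gᴴ = G := (cfc_predicate _ A : IsSelfAdjoint G)
  have hGA : G * A = cfc Real.sqrt A := by
    rw [← cfc_id' ℝ A, ← cfc_mul _ _ A (hc _) (hc _), cfc_id' ℝ A]
    simp only [inv_mul_eq_div, Real.div_sqrt]
  have hGGAG : G * G * A * G = G := by
    rw [← cfc_id' ℝ A, ← cfc_mul _ _ A (hc _) (hc _), ← cfc_mul _ _ A (hc _) (hc _),
      ← cfc_mul _ _ A (hc _) (hc _)]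
    congr 1 with x
    rw [mul_assoc (√x)⁻¹ (√x)⁻¹ x, inv_mul_eq_div (√x) x, Real.div_sqrt]
    simpa using mul_inv_mul_cancel (√x)⁻¹
  refine ⟨G * Mᴴ, ?_, by rw [Matrix.mul_assoc, hGA]⟩
  -- `UᴴU` is an orthogonal projection, so `1 - UᴴU` is one too.
  set S := (G * Mᴴ)ᴴ * (G * Mᴴ)
  have hS : Sᴴ = S := by simp [S, Matrix.mul_assoc]
  have hSS : S * S = S := by
    simp only [S, conjTranspose_mul, conjTranspose_conjTranspose, hG]
    calc M * G * (G * Mᴴ) * (M * G * (G * Mᴴ)) = M * (G * G * A * G) * G * Mᴴ := by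
          simp only [A, Matrix.mul_assoc]
      _ = _ := by rw [hGGAG, Matrix.mul_assoc, Matrix.mul_assoc]
  have h1S : 1 - S = (1 - S)ᴴ * (1 - S) := by
    rw [conjTranspose_sub, conjTranspose_one, hS, Matrix.sub_mul, Matrix.one_mul,
      Matrix.mul_sub, Matrix.mul_one, hSS, sub_self, sub_zero]
  rw [h1S]
  exact posSemidef_conjTranspose_mul_self _

end Matrix

lemma traceNorm_eq_re_trace_cfc_sqrt {n : ℕ} (M : Matrix (Fin n) (Fin n) ℂ) :
    traceNorm M = (cfc Real.sqrt (Mᴴ * M)).trace.re := by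
  rw [(isHermitian_conjTranspose_mul_self M).cfc_eq]
  rfl

theorem gentle_measurement_general {n : ℕ} (ρ P : Matrix (Fin n) (Fin n) ℂ) (l : ℝ)
    (hρ : IsDensityMatrix ρ) (hP : P.IsHermitian) (hProj : P * P = P)
    (htr : 1 - l ≤ (ρ * P).trace.re) :
    traceNorm (ρ - P * ρ * P) ≤ 2 * Real.sqrt l := by
  obtain ⟨hρ, hρ1⟩ := hρ
  have hPproj : IsStarProjection P := ⟨hProj, hP⟩
  set Q := 1 - P with hQ
  have hQρQ : (Q * ρ * Qᴴ).trace.re = 1 - (ρ * P).trace.re := by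
    rw [hPproj.one_sub.trace_mul_mul_conjTranspose, Matrix.mul_sub, Matrix.mul_one, trace_sub,
      Complex.sub_re, hρ1, Complex.one_re]
  have hPρP : (P * ρ * Pᴴ).trace.re ≤ 1 := by
    have hQρQ_nonneg := Complex.nonneg_iff.mp (hρ.mul_mul_conjTranspose_same Q).trace_nonneg
    rw [hPproj.trace_mul_mul_conjTranspose]
    linarith [hQρQ_nonneg.1]
  obtain ⟨U, hU, hUM⟩ := exists_contraction_mul_eq_cfc_sqrt (ρ - P * ρ * P)
  have hsplit : ρ - P * ρ * P = Q * ρ * 1ᴴ + P * ρ * Qᴴ := by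
    rw [hQ, conjTranspose_one, conjTranspose_sub, conjTranspose_one, hP.eq]
    noncomm_ring
  calc traceNorm (ρ - P * ρ * P) = (U * Q * ρ * 1ᴴ).trace.re + (U * P * ρ * Qᴴ).trace.re := by
        rw [traceNorm_eq_re_trace_cfc_sqrt, ← hUM, hsplit]
        simp only [Matrix.mul_add, Matrix.mul_assoc, trace_add, Complex.add_re]
    _ ≤ √((Q * ρ * Qᴴ).trace.re) * √((1 * ρ * 1ᴴ).trace.re) +
          √((P * ρ * Pᴴ).trace.re) * √((Q * ρ * Qᴴ).trace.re) :=
        add_le_add (hρ.re_trace_mul_mul_mul_conjTranspose_le hU _ _)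
          (hρ.re_trace_mul_mul_mul_conjTranspose_le hU _ _)
    _ ≤ √l * 1 + 1 * √l := by
        simp only [conjTranspose_one, Matrix.one_mul, Matrix.mul_one, hρ1, Complex.one_re,
          Real.sqrt_one, hQρQ]
        gcongr
        · linarith
        · exact Real.sqrt_le_one.mpr hPρP
        · linarith
    _ = 2 * Real.sqrt l := by ring

/-- Gentle measurement lemma: if `tr(ρP) ≥ 1 − λ` for a projection `P`,
then `‖ρ − PρP‖₁ ≤ 2√λ`. -/
theorem gentle_measurement {n : ℕ} (ρ P : Matrix (Fin n) (Fin n) ℂ) (l : ℝ)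
    (hρ : IsDensityMatrix ρ) (hP : P.IsHermitian) (hProj : P * P = P)
    (hl0 : 0 ≤ l) (hl1 : l ≤ 1)
    (htr : 1 - l ≤ (ρ * P).trace.re) :
    traceNorm (ρ - P * ρ * P) ≤ 2 * Real.sqrt l :=
  gentle_measurement_general ρ P l hρ hP hProj htr
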